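/- arXiv:2210.12888 — 2 statements merged into one kernel-verified Lean document; each statement's English description precedes it below -/
import Mathlib

section
/- With P_k, Q_k defined by P₀ = 0, Q₀ = 1, P_{k+1} = ρ²(2Q_k − P_k), Q_{k+1} = (4ρ−1)Q_k − 2ρP_k, for every k ≥ 1 the polynomial P_k − Q_k has degree 2k, constant coefficient ±1, leading coefficient ±2, and all coefficients other than the constant coefficient even; consequently P_k − Q_k is irreducible over ℚ (its reciprocal polynomial is Eisenstein at the prime 2). -/
open Polynomial

/-- The recursively defined pair of polynomials `(P_k, Q_k)` with `P₀ = 0`, `Q₀ = 1`,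
`P_{k+1} = ρ²(2Q_k − P_k)`, `Q_{k+1} = (4ρ−1)Q_k − 2ρP_k`. -/
noncomputable def PQ : ℕ → Polynomial ℤ × Polynomial ℤ
  | 0 => (0, 1)
  | k + 1 =>
      (X ^ 2 * (2 * (PQ k).2 - (PQ k).1),
       (4 * X - 1) * (PQ k).2 - 2 * X * (PQ k).1)

/-!
Modulo 2 the recursion gives `P_k ≡ 0` and `Q_k ≡ 1`, so every coefficient of `P_k − Q_k` except
the constant one is even. For `k ≥ 1` the factor `ρ²` makes `P_k(0) = 0` while `Q_k(0) = (-1)^k`,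
and a degree count shows `deg Q_k < 2k` while the top coefficient of `P_k` is `±2`. Hence the
mirror (reciprocal) polynomial of `P_k − Q_k` is Eisenstein at `2`; mirroring is a multiplicative
involution of `ℤ[X]`, and Gauss's lemma passes from `ℤ` to `ℚ`.
-/

namespace Polynomial

variable {R : Type*}

noncomputable def mirrorMulEquiv [Semiring R] [NoZeroDivisors R] : R[X] ≃* R[X] where
  toFun := mirror
  invFun := mirror
  left_inv := mirror_mirror
  right_inv := mirror_mirror
  map_mul' p q := mirror_mul_of_domain p q

theorem irreducible_mirror_iff [Semiring R] [NoZeroDivisors R] {f : R[X]} :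
    Irreducible f.mirror ↔ Irreducible f :=
  MulEquiv.irreducible_iff (mirrorMulEquiv (R := R)) (x := f)

theorem isPrimitive_of_isUnit_coeff [CommSemiring R] {f : R[X]} {n : ℕ} (h : IsUnit (f.coeff n)) :
    f.IsPrimitive :=
  fun _ hr => isUnit_of_dvd_unit ((C_dvd_iff_dvd_coeff _ _).1 hr n) h

theorem irreducible_of_eisenstein_criterion_mirror [CommRing R] [IsDomain R] {f : R[X]}
    {P : Ideal R} (hP : P.IsPrime) (h0 : IsUnit (f.coeff 0))
    (hfP : ∀ n ≠ 0, f.coeff n ∈ P) (hfl : f.leadingCoeff ∉ P ^ 2) (hdeg : 0 < f.natDegree) :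
    Irreducible f := by
  have htrail : f.natTrailingDegree = 0 := natTrailingDegree_eq_zero.2 (Or.inr h0.ne_zero)
  have hcoeff (n : ℕ) : f.mirror.coeff n = f.coeff (revAt f.natDegree n) := by
    rw [coeff_mirror, htrail, add_zero]
  have hlead : f.mirror.leadingCoeff = f.coeff 0 := by
    rw [mirror_leadingCoeff, trailingCoeff, htrail]
  have hdeg' : f.mirror.degree = f.natDegree := by
    rw [degree_eq_natDegree (mirror_eq_zero.not.2 (ne_zero_of_natDegree_gt hdeg)),
      mirror_natDegree]
  refine irreducible_mirror_iff.1 <| irreducible_of_eisenstein_criterion hP ?_ ?_ ?_ ?_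
    (isPrimitive_of_isUnit_coeff (hlead ▸ h0))
  · rw [hlead]
    exact fun h => hP.ne_top (P.eq_top_of_isUnit_mem h h0)
  · intro n hn
    rw [hdeg', Nat.cast_lt] at hn
    rw [hcoeff, revAt_le hn.le]
    exact hfP _ (by omega)
  · rw [hdeg']
    exact_mod_cast hdeg
  · rwa [hcoeff, revAt_le (Nat.zero_le _), Nat.sub_zero]

end Polynomial

@[simp] theorem PQ_zero : PQ 0 = (0, 1) := rfl

theorem PQ_succ_fst (k : ℕ) : (PQ (k + 1)).1 = X ^ 2 * (2 * (PQ k).2 - (PQ k).1) := rfl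

theorem PQ_succ_snd (k : ℕ) :
    (PQ (k + 1)).2 = (4 * X - 1) * (PQ k).2 - 2 * X * (PQ k).1 := rfl

theorem PQ_map_zmod_two (k : ℕ) : (PQ k).1.map (Int.castRingHom (ZMod 2)) = 0 ∧
    (PQ k).2.map (Int.castRingHom (ZMod 2)) = 1 := by
  have h2 : (2 : (ZMod 2)[X]) = 0 := by
    rw [← map_ofNat C 2, show (2 : ZMod 2) = 0 by decide, map_zero]
  induction k with
  | zero => simp
  | succ k ih =>
    simp only [PQ_succ_fst, PQ_succ_snd, Polynomial.map_sub, Polynomial.map_mul,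
      Polynomial.map_pow, Polynomial.map_ofNat, map_X, Polynomial.map_one, ih.1, ih.2]
    constructor
    · linear_combination X ^ 2 * h2
    · linear_combination (2 * X - 1 : (ZMod 2)[X]) * h2

theorem two_dvd_coeff_PQ_sub (k : ℕ) {n : ℕ} (hn : n ≠ 0) :
    2 ∣ ((PQ k).1 - (PQ k).2).coeff n := by
  have h : (((PQ k).1 - (PQ k).2).map (Int.castRingHom (ZMod 2))).coeff n = 0 := by
    rw [Polynomial.map_sub, (PQ_map_zmod_two k).1, (PQ_map_zmod_two k).2, zero_sub, coeff_neg,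
      coeff_one, if_neg hn, neg_zero]
  rw [coeff_map, eq_intCast] at h
  exact (ZMod.intCast_zmod_eq_zero_iff_dvd _ 2).1 h

theorem coeff_zero_PQ_snd (k : ℕ) : (PQ k).2.coeff 0 = (-1) ^ k := by
  induction k with
  | zero => simp
  | succ k ih => simp [PQ_succ_snd, mul_coeff_zero, ih, pow_succ]

theorem coeff_zero_PQ_succ_fst (k : ℕ) : (PQ (k + 1)).1.coeff 0 = 0 := by
  simp [PQ_succ_fst, mul_coeff_zero]

theorem natDegree_PQ_succ_le (k : ℕ) :
    (PQ (k + 1)).1.natDegree ≤ 2 * k + 2 ∧ (PQ (k + 1)).2.natDegree ≤ 2 * k + 1 := by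
  induction k with
  | zero =>
    rw [PQ_succ_fst, PQ_succ_snd, PQ_zero]
    constructor <;> compute_degree
  | succ k ih =>
    rw [PQ_succ_fst (k + 1), PQ_succ_snd (k + 1)]
    have h2 : (2 : ℤ[X]).natDegree ≤ 0 := (natDegree_ofNat 2).le
    constructor
    · refine (natDegree_mul_le_of_le (natDegree_X_pow_le 2)
        (natDegree_sub_le_of_le (natDegree_mul_le_of_le h2 ih.2) ih.1)).trans ?_
      omega
    · refine (natDegree_sub_le_of_le (natDegree_mul_le_of_le (by compute_degree) ih.2)
        (natDegree_mul_le_of_le (by compute_degree) ih.1)).trans ?_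
      omega

theorem coeff_two_mul_add_two_PQ_succ_fst (k : ℕ) :
    (PQ (k + 1)).1.coeff (2 * k + 2) = 2 * (-1) ^ k := by
  induction k with
  | zero => simp [PQ_succ_fst]
  | succ k ih =>
    rw [PQ_succ_fst (k + 1), show 2 * (k + 1) + 2 = 2 + (2 * k + 2) by ring, coeff_X_pow_mul',
      if_pos (by omega), Nat.add_sub_cancel_left, coeff_sub, coeff_ofNat_mul,
      coeff_eq_zero_of_natDegree_lt (by have := (natDegree_PQ_succ_le k).2; omega), ih]
    ring

theorem natDegree_and_leadingCoeff_PQ_succ_sub (k : ℕ) :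
    ((PQ (k + 1)).1 - (PQ (k + 1)).2).natDegree = 2 * k + 2 ∧
      ((PQ (k + 1)).1 - (PQ (k + 1)).2).leadingCoeff = 2 * (-1) ^ k := by
  have htop : ((PQ (k + 1)).1 - (PQ (k + 1)).2).coeff (2 * k + 2) = 2 * (-1) ^ k := by
    rw [coeff_sub, coeff_two_mul_add_two_PQ_succ_fst,
      coeff_eq_zero_of_natDegree_lt (by have := (natDegree_PQ_succ_le k).2; omega), sub_zero]
  have hdeg : ((PQ (k + 1)).1 - (PQ (k + 1)).2).natDegree = 2 * k + 2 :=
    natDegree_eq_of_le_of_coeff_ne_zero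
      (natDegree_sub_le_of_le (natDegree_PQ_succ_le k).1 (natDegree_PQ_succ_le k).2 |>.trans
        (by omega))
      (by rw [htop]; exact mul_ne_zero two_ne_zero (pow_ne_zero _ (by norm_num)))
  exact ⟨hdeg, by rw [leadingCoeff, hdeg, htop]⟩

theorem coeff_zero_PQ_succ_sub (k : ℕ) :
    ((PQ (k + 1)).1 - (PQ (k + 1)).2).coeff 0 = (-1) ^ k := by
  rw [coeff_sub, coeff_zero_PQ_succ_fst, coeff_zero_PQ_snd, pow_succ]
  ring

/-- For every `k ≥ 1`, `P_k − Q_k` has degree `2k`, constant coefficient `±1`, leading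
coefficient `±2`, all non-constant coefficients even, and is irreducible over `ℚ`. -/
theorem stmt_11 (k : ℕ) (hk : 1 ≤ k) :
    ((PQ k).1 - (PQ k).2).natDegree = 2 * k ∧
    (((PQ k).1 - (PQ k).2).coeff 0 = 1 ∨ ((PQ k).1 - (PQ k).2).coeff 0 = -1) ∧
    (((PQ k).1 - (PQ k).2).leadingCoeff = 2 ∨ ((PQ k).1 - (PQ k).2).leadingCoeff = -2) ∧
    (∀ n, n ≠ 0 → (2 : ℤ) ∣ ((PQ k).1 - (PQ k).2).coeff n) ∧
    Irreducible (((PQ k).1 - (PQ k).2).map (Int.castRingHom ℚ)) := by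
  obtain ⟨j, rfl⟩ := Nat.exists_eq_add_of_le' hk
  obtain ⟨hdeg, hlead⟩ := natDegree_and_leadingCoeff_PQ_succ_sub j
  have hc0 := coeff_zero_PQ_succ_sub j
  have hunit : IsUnit (((PQ (j + 1)).1 - (PQ (j + 1)).2).coeff 0) := hc0 ▸ isUnit_neg_one.pow j
  have hdvd (n : ℕ) (hn : n ≠ 0) := two_dvd_coeff_PQ_sub (j + 1) hn
  refine ⟨by rw [hdeg]; ring, hc0 ▸ neg_one_pow_eq_or ℤ j, ?_, hdvd, ?_⟩
  · rcases neg_one_pow_eq_or ℤ j with h | h <;> simp [hlead, h]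
  refine (IsPrimitive.Int.irreducible_iff_irreducible_map_cast
    (isPrimitive_of_isUnit_coeff hunit)).1 ?_
  refine irreducible_of_eisenstein_criterion_mirror
    ((Ideal.span_singleton_prime two_ne_zero).2 Int.prime_two) hunit
    (fun n hn => Ideal.mem_span_singleton.2 (hdvd n hn)) ?_ (by omega)
  rw [Ideal.span_singleton_pow, Ideal.mem_span_singleton, hlead]
  rcases neg_one_pow_eq_or ℤ j with h | h <;> rw [h] <;> decide
end

section
/- Let U = [[0,0,1],[0,0,0],[1,0,0]] and D = [[0,2,0],[0,0,2],[0,0,0]]. Then the minimum over y in the 2-dimensional simplex Δ₃ of (1 − yᵀUy)/(yᵀDy) (interpreted as +∞ when yᵀDy = 0) equals 1 + 1/√2, attained at y* = (1 − 1/√2, √2 − 1, 1 − 1/√2). -/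
/-!
Writing `t = a + c` for a point `(a, b, c)` of the simplex, `b = 1 - t` and `4ac ≤ t²`, so the
ratio is at least `(2 - t²) / (4t(1 - t))`. With `s = √2`, clearing this denominator leaves
`(3 + 2s)t² - (4 + 2s)t + 2 = (3 + 2s)(t - (2 - s))²`, whose discriminant vanishes; equality
forces `t = 2 - √2` and `a = c`, which is the point `y*`.
-/

open Matrix Real

lemma mem_stdSimplex_fin_three_iff {z : Fin 3 → ℝ} :
    z ∈ stdSimplex ℝ (Fin 3) ↔ 0 ≤ z 0 ∧ 0 ≤ z 1 ∧ 0 ≤ z 2 ∧ z 0 + z 1 + z 2 = 1 := by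
  simp [stdSimplex, Fin.forall_fin_succ, Fin.sum_univ_three, and_assoc]

lemma dotProduct_mulVec_antidiag_corners {R : Type*} [CommRing R] (z : Fin 3 → R) :
    z ⬝ᵥ (!![0, 0, 1; 0, 0, 0; 1, 0, 0] *ᵥ z) = 2 * (z 0 * z 2) := by
  simp [dotProduct, mulVec, Fin.sum_univ_three]
  ring

lemma dotProduct_mulVec_two_superdiag {R : Type*} [CommRing R] (z : Fin 3 → R) :
    z ⬝ᵥ (!![0, 2, 0; 0, 0, 2; 0, 0, 0] *ᵥ z) = 2 * (z 1 * (z 0 + z 2)) := by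
  simp [dotProduct, mulVec, Fin.sum_univ_three]
  ring

lemma one_div_sqrt_two : 1 / √2 = √2 / 2 := by
  rw [div_eq_div_iff (by positivity) two_ne_zero, one_mul, mul_self_sqrt zero_le_two]

lemma two_sub_sq_sub_mul_eq_sq (t : ℝ) :
    2 - t ^ 2 - (4 + 2 * √2) * (t * (1 - t)) = (3 + 2 * √2) * (t - (2 - √2)) ^ 2 := by
  linear_combination (5 - 4 * t - 2 * √2) * sq_sqrt (zero_le_two : (0 : ℝ) ≤ 2)

lemma mul_le_two_sub_sq (t : ℝ) : (4 + 2 * √2) * (t * (1 - t)) ≤ 2 - t ^ 2 := by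
  have := two_sub_sq_sub_mul_eq_sq t
  nlinarith [sq_nonneg (t - (2 - √2)), sqrt_nonneg 2]

lemma one_add_one_div_sqrt_two_mul_le {a b c : ℝ} (hsum : a + b + c = 1) :
    (1 + 1 / √2) * (2 * (b * (a + c))) ≤ 1 - 2 * (a * c) := by
  have hb : b = 1 - (a + c) := by linarith
  have hbound := mul_le_two_sub_sq (a + c)
  rw [one_div_sqrt_two, hb]
  nlinarith [sq_nonneg (a - c)]

/-- For `U = [[0,0,1],[0,0,0],[1,0,0]]` and `D = [[0,2,0],[0,0,2],[0,0,0]]`, the minimum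
over the simplex `Δ₃` of `(1 − yᵀUy)/(yᵀDy)` (interpreted as `+∞` when `yᵀDy = 0`) is
`1 + 1/√2`, attained at `y* = (1 − 1/√2, √2 − 1, 1 − 1/√2)`. -/
theorem stmt_12 :
    let U : Matrix (Fin 3) (Fin 3) ℝ := !![0, 0, 1; 0, 0, 0; 1, 0, 0]
    let D : Matrix (Fin 3) (Fin 3) ℝ := !![0, 2, 0; 0, 0, 2; 0, 0, 0]
    let y : Fin 3 → ℝ := ![1 - 1 / Real.sqrt 2, Real.sqrt 2 - 1, 1 - 1 / Real.sqrt 2]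
    y ∈ stdSimplex ℝ (Fin 3) ∧
    y ⬝ᵥ (D *ᵥ y) ≠ 0 ∧
    (1 - y ⬝ᵥ (U *ᵥ y)) / (y ⬝ᵥ (D *ᵥ y)) = 1 + 1 / Real.sqrt 2 ∧
    ∀ z ∈ stdSimplex ℝ (Fin 3), z ⬝ᵥ (D *ᵥ z) ≠ 0 →
      1 + 1 / Real.sqrt 2 ≤ (1 - z ⬝ᵥ (U *ᵥ z)) / (z ⬝ᵥ (D *ᵥ z)) := by
  intro U D y
  simp only [U, D, dotProduct_mulVec_antidiag_corners, dotProduct_mulVec_two_superdiag]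
  have hs2 : √2 * √2 = 2 := mul_self_sqrt zero_le_two
  have hs : 4 / 3 < √2 := by nlinarith [sqrt_nonneg 2]
  have hy : y 0 = 1 - √2 / 2 ∧ y 1 = √2 - 1 ∧ y 2 = 1 - √2 / 2 := by
    simp [y, -one_div, one_div_sqrt_two]
  have hyD : 0 < 2 * (y 1 * (y 0 + y 2)) := by
    rw [hy.1, hy.2.1, hy.2.2]; nlinarith
  refine ⟨?_, hyD.ne', ?_, fun z hz hzD => ?_⟩
  · rw [mem_stdSimplex_fin_three_iff, hy.1, hy.2.1, hy.2.2]
    refine ⟨?_, ?_, ?_, ?_⟩ <;> nlinarith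
  · rw [div_eq_iff hyD.ne', one_div_sqrt_two, hy.1, hy.2.1, hy.2.2]
    linear_combination (√2 - 3 / 2) * hs2
  · obtain ⟨ha, hb, hc, hsum⟩ := mem_stdSimplex_fin_three_iff.mp hz
    have hzD : 0 < 2 * (z 1 * (z 0 + z 2)) := lt_of_le_of_ne (by positivity) hzD.symm
    rw [le_div_iff₀ hzD]
    exact one_add_one_div_sqrt_two_mul_le hsum
end
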